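/- arXiv:1611.09143 — 3 statements merged into one kernel-verified Lean document; each statement's English description precedes it below -/
import Mathlib

section
/- Let SNR_d be exponential with mean γ_d and SNR_e be exponential with mean γ_e, independent. For a single transmission with secrecy rate R = 0 and dummy-message rate R₁ ≥ 0, the connection outage probability P_co = 1 - exp(-(2^{R₁} - 1)/γ_d) and the secrecy outage probability P_so = exp(-(2^{R₁} - 1)/γ_e). Then there exists R₁ ≥ 0 with P_co ≤ ξ_c and P_so ≤ ξ_s if and only if ξ_s ≥ (1 - ξ_c)^{γ_d/γ_e}, where ξ_c ∈ (0,1) and ξ_s ∈ (0,1). -/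
/-!
Write `x = 2 ^ R₁ - 1` for the decoding threshold; as `R₁` ranges over `[0, ∞)` so does `x`.
Since `exp (-x / γe) = exp (-x / γd) ^ (γd / γe)`, the connection constraint
`1 - ξc ≤ exp (-x / γd)` forces `(1 - ξc) ^ (γd / γe) ≤ exp (-x / γe) ≤ ξs`.
Conversely, the threshold `x = -γd log (1 - ξc)` meets the connection constraint with equality
and gives secrecy outage probability exactly `(1 - ξc) ^ (γd / γe)`.
-/

open Real

theorem exists_two_rpow_sub_one_iff {P : ℝ → Prop} :
    (∃ R : ℝ, 0 ≤ R ∧ P ((2 : ℝ) ^ R - 1)) ↔ ∃ x : ℝ, 0 ≤ x ∧ P x := by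
  constructor
  · rintro ⟨R, hR, hP⟩
    exact ⟨_, sub_nonneg.2 (one_le_rpow (by norm_num) hR), hP⟩
  · rintro ⟨x, hx, hP⟩
    refine ⟨logb 2 (1 + x), logb_nonneg (by norm_num) (by linarith), ?_⟩
    rwa [rpow_logb (by norm_num) (by norm_num) (by linarith), add_sub_cancel_left]

theorem exp_neg_div_rpow_div {γ γ' : ℝ} (hγ : γ ≠ 0) (x : ℝ) :
    exp (-x / γ) ^ (γ / γ') = exp (-x / γ') := by
  rw [← exp_mul]
  congr 1
  field_simp

theorem exp_neg_neg_mul_log_div {a : ℝ} (ha : 0 < a) (γ γ' : ℝ) :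
    exp (-(-γ * log a) / γ') = a ^ (γ / γ') := by
  rw [rpow_def_of_pos ha]
  ring_nf

theorem single_transmission_outage_tradeoff_general
    (γd γe ξc ξs : ℝ) (hγd : 0 < γd) (hγe : 0 < γe)
    (hξc : ξc ∈ Set.Ioo (0 : ℝ) 1) :
    (∃ R₁ : ℝ, 0 ≤ R₁ ∧
        1 - exp (-((2 : ℝ) ^ R₁ - 1) / γd) ≤ ξc ∧
        exp (-((2 : ℝ) ^ R₁ - 1) / γe) ≤ ξs)
      ↔ ξs ≥ (1 - ξc) ^ (γd / γe) := by
  obtain ⟨hξc0, hξc1⟩ := hξc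
  have hmargin : 0 < 1 - ξc := by linarith
  rw [exists_two_rpow_sub_one_iff (P := fun x ↦ 1 - exp (-x / γd) ≤ ξc ∧ exp (-x / γe) ≤ ξs)]
  constructor
  · rintro ⟨x, -, hco, hso⟩
    calc (1 - ξc) ^ (γd / γe)
        ≤ exp (-x / γd) ^ (γd / γe) :=
          rpow_le_rpow hmargin.le (by linarith) (div_pos hγd hγe).le
      _ = exp (-x / γe) := exp_neg_div_rpow_div hγd.ne' x
      _ ≤ ξs := hso
  · intro h
    have hlog : log (1 - ξc) ≤ 0 := log_nonpos hmargin.le (by linarith)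
    refine ⟨-γd * log (1 - ξc), by nlinarith, ?_, ?_⟩
    · rw [exp_neg_neg_mul_log_div hmargin, div_self hγd.ne', rpow_one]
      linarith
    · rwa [exp_neg_neg_mul_log_div hmargin]

theorem single_transmission_outage_tradeoff
    (γd γe ξc ξs : ℝ) (hγd : 0 < γd) (hγe : 0 < γe)
    (hξc : ξc ∈ Set.Ioo (0 : ℝ) 1) (hξs : ξs ∈ Set.Ioo (0 : ℝ) 1) :
    (∃ R₁ : ℝ, 0 ≤ R₁ ∧
        1 - exp (-((2 : ℝ) ^ R₁ - 1) / γd) ≤ ξc ∧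
        exp (-((2 : ℝ) ^ R₁ - 1) / γe) ≤ ξs)
      ↔ ξs ≥ (1 - ξc) ^ (γd / γe) :=
  single_transmission_outage_tradeoff_general γd γe ξc ξs hγd hγe hξc
end

section
/- With the same single-transmission model, for a fixed secrecy rate R ≥ 0 there exists a dummy-message rate R₁ ≥ 0 such that P_co = 1 - exp(-(2^{R+R₁} - 1)/γ_d) ≤ ξ_c and P_so = exp(-(2^{R₁} - 1)/γ_e) ≤ ξ_s if and only if R ≤ log₂( (1 - γ_d·ln(1 - ξ_c)) / (1 - γ_e·ln ξ_s) ). -/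
open Real

theorem single_transmission_fixed_rate_tradeoff
    (γd γe ξc ξs R : ℝ) (hγd : 0 < γd) (hγe : 0 < γe)
    (hξc : ξc ∈ Set.Ioo (0 : ℝ) 1) (hξs : ξs ∈ Set.Ioo (0 : ℝ) 1) (hR : 0 ≤ R) :
    (∃ R₁ : ℝ, 0 ≤ R₁ ∧
        1 - exp (-((2 : ℝ) ^ (R + R₁) - 1) / γd) ≤ ξc ∧
        exp (-((2 : ℝ) ^ R₁ - 1) / γe) ≤ ξs)
      ↔ R ≤ logb 2 ((1 - γd * Real.log (1 - ξc)) / (1 - γe * Real.log ξs)) := by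
  obtain ⟨hξc0, hξc1⟩ := hξc
  obtain ⟨hξs0, hξs1⟩ := hξs
  have h1ξc : (0:ℝ) < 1 - ξc := by linarith
  set A := 1 - γd * Real.log (1 - ξc) with hA
  set B := 1 - γe * Real.log ξs with hB
  have hlogc : Real.log (1 - ξc) < 0 := Real.log_neg h1ξc (by linarith)
  have hlogs : Real.log ξs < 0 := Real.log_neg hξs0 hξs1
  have hA1 : 1 ≤ A := by nlinarith
  have hB1 : 1 ≤ B := by nlinarith
  have hA0 : 0 < A := by linarith
  have hB0 : 0 < B := by linarith
  have h2pos : (0:ℝ) < 2 := by norm_num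
  have h2ne : (2:ℝ) ≠ 1 := by norm_num
  constructor
  · rintro ⟨R₁, hR₁, hco, hso⟩
    have h1 : (2:ℝ) ^ (R + R₁) ≤ A := by
      have hc : 1 - ξc ≤ exp (-((2:ℝ) ^ (R + R₁) - 1) / γd) := by linarith
      have h := (Real.log_le_iff_le_exp h1ξc).mpr hc
      have h' := (le_div_iff₀ hγd).mp h
      nlinarith
    have h2 : B ≤ (2:ℝ) ^ R₁ := by
      have h := Real.log_le_log (Real.exp_pos _) hso
      rw [Real.log_exp] at h
      have h' := (div_le_iff₀ hγe).mp h
      nlinarith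
    have h3 : (2:ℝ) ^ R * B ≤ A := by
      have := Real.rpow_add h2pos R R₁
      have hpos : (0:ℝ) < (2:ℝ) ^ R := Real.rpow_pos_of_pos h2pos R
      nlinarith
    have h4 : (2:ℝ) ^ R ≤ A / B := (le_div_iff₀ hB0).mpr h3
    have h5 : logb 2 ((2:ℝ) ^ R) ≤ logb 2 (A / B) :=
      (Real.logb_le_logb one_lt_two (Real.rpow_pos_of_pos h2pos R) (div_pos hA0 hB0)).mpr h4
    rwa [Real.logb_rpow h2pos h2ne] at h5
  · intro h
    refine ⟨logb 2 B, Real.logb_nonneg (by norm_num) hB1, ?_, ?_⟩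
    · have hX : (2:ℝ) ^ (R + logb 2 B) = (2:ℝ) ^ R * B := by
        rw [Real.rpow_add h2pos, Real.rpow_logb h2pos h2ne hB0]
      have h2R : (2:ℝ) ^ R ≤ A / B := by
        have := (Real.rpow_le_rpow_left_iff (x := 2) (by norm_num)).mpr h
        rwa [Real.rpow_logb h2pos h2ne (div_pos hA0 hB0)] at this
      have h3 : (2:ℝ) ^ (R + logb 2 B) ≤ A := by
        rw [hX]; exact (le_div_iff₀ hB0).mp h2R
      have h4 : Real.log (1 - ξc) ≤ -((2:ℝ) ^ (R + logb 2 B) - 1) / γd := by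
        rw [le_div_iff₀ hγd]; nlinarith
      have h5 : 1 - ξc ≤ exp (-((2:ℝ) ^ (R + logb 2 B) - 1) / γd) := by
        calc 1 - ξc = exp (Real.log (1 - ξc)) := (Real.exp_log h1ξc).symm
          _ ≤ _ := Real.exp_le_exp.mpr h4
      linarith
    · have hX : (2:ℝ) ^ (logb 2 B) = B := Real.rpow_logb h2pos h2ne hB0
      have h4 : -((2:ℝ) ^ (logb 2 B) - 1) / γe ≤ Real.log ξs := by
        rw [div_le_iff₀ hγe, hX]; nlinarith
      calc exp (-((2:ℝ) ^ (logb 2 B) - 1) / γe) ≤ exp (Real.log ξs) :=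
            Real.exp_le_exp.mpr h4
        _ = ξs := Real.exp_log hξs0
end

section
/- Let η(R, R₁) = R·(1 - P_co(R,R₁)) where for the L=1 Rayleigh model P_co(R,R₁) = 1 - exp(-(2^{R+R₁} - 1)/γ_d). For fixed R, η is strictly decreasing in R₁; hence the throughput-optimal R₁ subject to P_so(R₁) = exp(-(2^{R₁}-1)/γ_e) ≤ ξ_s is R₁* = log₂(1 - γ_e·ln ξ_s). -/
/-! Both the success probability and the secrecy outage probability are strictly decreasing
functions of the SNR threshold `2 ^ rate`. Hence the throughput decreases in `R₁`, and the
outage constraint `exp (-(2 ^ R₁ - 1) / γe) ≤ ξs` is equivalent to `1 - γe * log ξs ≤ 2 ^ R₁`,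
whose least solution is `R₁ = logb 2 (1 - γe * log ξs)`. -/

open Real

theorem strictAnti_exp_neg_sub_one_div {γ : ℝ} (hγ : 0 < γ) :
    StrictAnti fun x : ℝ => exp (-(x - 1) / γ) := fun x y hxy =>
  exp_lt_exp.2 (by gcongr)

theorem exp_neg_sub_one_div_le_iff {γ ξ x : ℝ} (hγ : 0 < γ) (hξ : 0 < ξ) :
    exp (-(x - 1) / γ) ≤ ξ ↔ 1 - γ * log ξ ≤ x := by
  rw [← le_log_iff_exp_le hξ, div_le_iff₀ hγ]
  constructor <;> intro h <;> linarith

theorem strictAnti_mul_exp_neg_rpow_add_sub_one_div {b a c γ : ℝ} (hb : 1 < b) (hc : 0 < c)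
    (hγ : 0 < γ) : StrictAnti fun y : ℝ => c * exp (-(b ^ (a + y) - 1) / γ) :=
  ((strictAnti_exp_neg_sub_one_div hγ).comp_strictMono
    ((strictMono_rpow_of_base_gt_one hb).comp (strictMono_id.const_add a))).const_mul hc

theorem throughput_strictly_decreasing_and_optimal_R1
    (γd γe ξs R : ℝ) (hγd : 0 < γd) (hγe : 0 < γe)
    (hξs : ξs ∈ Set.Ioo (0 : ℝ) 1) (hR : 0 < R) :
    StrictAnti (fun R₁ : ℝ => R * exp (-((2 : ℝ) ^ (R + R₁) - 1) / γd)) ∧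
    (0 ≤ logb 2 (1 - γe * Real.log ξs) ∧
      exp (-((2 : ℝ) ^ (logb 2 (1 - γe * Real.log ξs)) - 1) / γe) ≤ ξs ∧
      ∀ R₁ : ℝ, 0 ≤ R₁ → exp (-((2 : ℝ) ^ R₁ - 1) / γe) ≤ ξs →
        R * exp (-((2 : ℝ) ^ (R + R₁) - 1) / γd) ≤
          R * exp (-((2 : ℝ) ^ (R + logb 2 (1 - γe * Real.log ξs)) - 1) / γd)) := by
  obtain ⟨hξ0, hξ1⟩ := hξs
  have hthreshold : 1 ≤ 1 - γe * log ξs := by nlinarith [log_neg hξ0 hξ1]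
  have hη := strictAnti_mul_exp_neg_rpow_add_sub_one_div (a := R) one_lt_two hR hγd
  have hsecrecy (x : ℝ) := exp_neg_sub_one_div_le_iff (x := x) hγe hξ0
  refine ⟨hη, logb_nonneg one_lt_two hthreshold, ?_, fun R₁ _ hR₁ => hη.antitone ?_⟩
  · rw [rpow_logb two_pos (by norm_num) (by linarith)]
    exact (hsecrecy _).2 le_rfl
  · exact (logb_le_iff_le_rpow one_lt_two (by linarith)).2 ((hsecrecy _).1 hR₁)
end
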